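/- If D ⊆ ℕ is bounded truth-table reducible to K, then D is not bi-immune; that is, either D or its complement has an infinite computably enumerable subset (or is finite). -/

import Mathlib

/-- Codes for oracle Turing machines (partial recursive functions relative to an oracle). -/
inductive OCode : Type
  | zero : OCode
  | succ : OCode
  | left : OCode
  | right : OCode
  | oracle : OCode
  | pair : OCode → OCode → OCode
  | comp : OCode → OCode → OCode
  | prec : OCode → OCode → OCode
  | rfind' : OCode → OCode

namespace OCode

/-- A standard enumeration of oracle machine codes. -/
def ofNat : ℕ → OCode
  | 0 => zero
  | 1 => succ
  | 2 => left
  | 3 => right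
  | 4 => oracle
  | n + 5 =>
    let m := n.div2.div2
    have hm : m < n + 5 := by
      simp only [m, Nat.div2_val]
      exact
        lt_of_le_of_lt (le_trans (Nat.div_le_self _ _) (Nat.div_le_self _ _))
          (Nat.lt_succ_of_le (Nat.le_add_right _ _))
    have _m1 : m.unpair.1 < n + 5 := lt_of_le_of_lt m.unpair_left_le hm
    have _m2 : m.unpair.2 < n + 5 := lt_of_le_of_lt m.unpair_right_le hm
    match n.bodd, n.div2.bodd with
    | false, false => pair (ofNat m.unpair.1) (ofNat m.unpair.2)
    | false, true  => comp (ofNat m.unpair.1) (ofNat m.unpair.2)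
    | true , false => prec (ofNat m.unpair.1) (ofNat m.unpair.2)
    | true , true  => rfind' (ofNat m)
  decreasing_by all_goals first | exact _m1 | exact _m2 | exact hm

/-- Evaluation of an oracle machine code relative to an oracle `g`. -/
def eval (g : ℕ →. ℕ) : OCode → ℕ →. ℕ
  | zero => pure 0
  | succ => Nat.succ
  | left => ↑fun n : ℕ => n.unpair.1
  | right => ↑fun n : ℕ => n.unpair.2
  | oracle => g
  | pair cf cg => fun n => Nat.pair <$> eval g cf n <*> eval g cg n
  | comp cf cg => fun n => eval g cg n >>= eval g cf
  | prec cf cg =>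
    Nat.unpaired fun a n =>
      n.rec (eval g cf a) fun y IH => do
        let i ← IH
        eval g cg (Nat.pair a (Nat.pair y i))
  | rfind' cf =>
    Nat.unpaired fun a m =>
      (Nat.rfind fun n => (fun m => m = 0) <$> eval g cf (Nat.pair a (n + m))).map (· + m)

end OCode

open Classical in
/-- The characteristic function of a set of naturals, as a `{0,1}`-valued function. -/
noncomputable def chi (A : Set ℕ) : ℕ → ℕ := fun n => if n ∈ A then 1 else 0

/-- The characteristic function of `A`, as a (total) partial function, used as an oracle. -/
noncomputable def charFun (A : Set ℕ) : ℕ →. ℕ := fun n => Part.some (chi A n)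

/-- `A` is Turing reducible to `B`: some oracle machine with oracle (the characteristic
function of) `B` computes the characteristic function of `A`. -/
def TuringRed (A B : Set ℕ) : Prop :=
  ∃ c : OCode, ∀ n, OCode.eval (charFun B) c n = Part.some (chi A n)

/-- The Turing jump of `A` : the halting problem relative to `A`. -/
def jump (A : Set ℕ) : Set ℕ :=
  {e | (OCode.eval (charFun A) (OCode.ofNat e) e).Dom}

/-- The halting set `K = {e : Mₑ(e) halts}`. -/
def Kset : Set ℕ := {e | ((Denumerable.ofNat Nat.Partrec.Code e).eval e).Dom}

/-- The `e`-th computably enumerable set `Wₑ`, the domain of the `e`-th machine. -/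
def Wenum (e : ℕ) : Set ℕ := {x | ((Denumerable.ofNat Nat.Partrec.Code e).eval x).Dom}

/-- A set of naturals is computably enumerable. -/
def CEset (A : Set ℕ) : Prop := ∃ c : Nat.Partrec.Code, A = {x | (c.eval x).Dom}

open Classical in
/-- The list of oracle answers of `B` to a list of queries. -/
noncomputable def answers (B : Set ℕ) (qs : List ℕ) : List Bool :=
  qs.map fun q => decide (q ∈ B)

/-- Truth-table reducibility: a total computable reduction, given by a computable function
producing the queries and a total computable function evaluating the truth table on
the vector of oracle answers. -/
def TTRed (A B : Set ℕ) : Prop :=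
  ∃ f : ℕ → List ℕ, ∃ g : ℕ → List Bool → Bool,
    Computable f ∧ Computable₂ g ∧ ∀ x, x ∈ A ↔ g x (answers B (f x)) = true

/-- Bounded truth-table reducibility: truth-table reducibility with a constant bound
on the number of queries. -/
def BTTRed (A B : Set ℕ) : Prop :=
  ∃ f : ℕ → List ℕ, ∃ g : ℕ → List Bool → Bool, ∃ k : ℕ,
    Computable f ∧ Computable₂ g ∧ (∀ x, (f x).length ≤ k) ∧
    ∀ x, x ∈ A ↔ g x (answers B (f x)) = true

/-- A set is immune if it is infinite but has no infinite c.e. subset. -/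
def Immune (C : Set ℕ) : Prop :=
  C.Infinite ∧ ∀ W : Set ℕ, CEset W → W ⊆ C → W.Finite

/-- A set is bi-immune if both it and its complement are immune. -/
def BiImmune (C : Set ℕ) : Prop := Immune C ∧ Immune Cᶜ

/-- The principal function of `B`: `pfun B x` is the `x`-th element of `B` in increasing order. -/
noncomputable def pfun (B : Set ℕ) : ℕ → ℕ := Nat.nth (· ∈ B)

/-- A set is hyperimmune if it is infinite and its principal function is not majorized
by any computable function. -/
def Hyperimmune (B : Set ℕ) : Prop :=
  B.Infinite ∧ ∀ g : ℕ → ℕ, Computable g → ¬ ∀ x, pfun B x < g x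

/-- `D` is weakly `n`-c.e.: some computable approximation `h` converges to the
characteristic function of `D` with at most `n` mind changes on each argument. -/
def WeaklyNCE (n : ℕ) (D : Set ℕ) : Prop :=
  ∃ h : ℕ → ℕ → ℕ, Computable₂ h ∧ ∀ x,
    (∀ᶠ s in Filter.atTop, h x s = chi D x) ∧
    {s | h x s ≠ h x (s + 1)}.Finite ∧ {s | h x s ≠ h x (s + 1)}.ncard ≤ n

/-- `f` is in `EN m`: there are `m` partial computable functions such that on every
input at least one of them converges to the correct value of `f`. -/
def EN {α β : Type} [Primcodable α] [Primcodable β] (m : ℕ) (f : α → β) : Prop :=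
  ∃ F : Fin m → α →. β, (∀ i, Partrec (F i)) ∧ ∀ x, ∃ i, f x ∈ F i x

/-- The counting function `#ₙ^A`: the number of distinct elements among the inputs
that belong to `A`. -/
noncomputable def cardFn (A : Set ℕ) (n : ℕ) (v : List.Vector ℕ n) : ℕ :=
  ({x | x ∈ v.toList} ∩ A).ncard

open Classical in
/-- The `n`-fold characteristic function `χₙ^A`. -/
noncomputable def chiVec (A : Set ℕ) (n : ℕ) (v : List.Vector ℕ n) : List.Vector Bool n :=
  v.map fun x => decide (x ∈ A)

/-!
Evaluating the truth table on the stage-`s` approximations of `K` gives a computable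
approximation to `D`. Since `K` is c.e., each query flips at most once, from "not yet halted"
to "halted", so on every input the approximation changes its mind at most `k` times, `k` being
the bound on the number of queries. Let `j` be the largest number such that infinitely many
inputs are seen to make `j` mind changes. Past finitely many inputs, an input with `j`
observed changes makes no further ones, so its current guess is already correct. Searching
for such stages enumerates two c.e. sets, contained in `D` and in its complement, whose union
is infinite.
-/

open Filter Set

def mindChanges {β : Type*} (u : ℕ → β) : Set ℕ := {t | u t ≠ u (t + 1)}

theorem mindChanges_comp_subset {β γ : Type*} (F : β → γ) (u : ℕ → β) :
    mindChanges (F ∘ u) ⊆ mindChanges u :=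
  fun _ ht hu => ht (congrArg F hu)

theorem Monotone.mindChanges_subsingleton {b : ℕ → Bool} (hb : Monotone b) :
    (mindChanges b).Subsingleton := by
  have hrise : ∀ t ∈ mindChanges b, b t = false ∧ b (t + 1) = true := fun t ht => by
    have hle := hb (Nat.le_succ t)
    cases h₀ : b t <;> cases h₁ : b (t + 1) <;> simp_all [mindChanges, Bool.le_iff_imp]
  have hnot_lt : ∀ {s t}, s ∈ mindChanges b → t ∈ mindChanges b → ¬ s < t :=
    fun hs ht hlt => by
      have := hb (show _ + 1 ≤ _ from hlt)
      rw [(hrise _ hs).2, (hrise _ ht).1] at this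
      exact absurd this (by decide)
  intro s hs t ht
  by_contra hne
  rcases Nat.lt_or_gt_of_ne hne with hlt | hlt
  exacts [hnot_lt hs ht hlt, hnot_lt ht hs hlt]

theorem encard_mindChanges_map_le {α : Type*} {b : ℕ → α → Bool}
    (hb : ∀ q, Monotone fun t => b t q) (l : List α) :
    (mindChanges fun t => l.map (b t)).encard ≤ l.length := by
  induction l with
  | nil => simp [mindChanges]
  | cons q l ih =>
    have hsub : (mindChanges fun t => (q :: l).map (b t)) ⊆
        (mindChanges fun t => b t q) ∪ mindChanges fun t => l.map (b t) := by
      intro t ht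
      by_contra hn
      simp only [mem_union, mindChanges, mem_ofPred_eq, not_or, not_not] at hn
      exact ht (by simp [hn.1, hn.2])
    calc _ ≤ _ := encard_le_encard hsub
      _ ≤ _ := encard_union_le _ _
      _ ≤ 1 + l.length :=
        add_le_add (encard_le_one_iff_subsingleton.2 (hb q).mindChanges_subsingleton) ih
      _ = _ := by simp [add_comm]

def changesBelow (u : ℕ → ℕ) : ℕ → ℕ
  | 0 => 0
  | s + 1 => changesBelow u s + if u s = u (s + 1) then 0 else 1

theorem changesBelow_eq_ncard (u : ℕ → ℕ) (s : ℕ) :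
    changesBelow u s = (mindChanges u ∩ Iio s).ncard := by
  induction s with
  | zero => simp [changesBelow]
  | succ s ih =>
    have hIio : Iio (s + 1) = insert s (Iio s) := by ext; simp
    rw [changesBelow, ih, hIio]
    by_cases hs : u s = u (s + 1)
    · rw [if_pos hs, inter_insert_of_notMem (show s ∉ mindChanges u from not_not.2 hs), add_zero]
    · rw [if_neg hs, inter_insert_of_mem (show s ∈ mindChanges u from hs),
        ncard_insert_of_notMem fun h => lt_irrefl s h.2]

theorem computable₂_changesBelow {h : ℕ → ℕ → ℕ} (hh : Computable₂ h) :
    Computable₂ fun x s => changesBelow (h x) s := by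
  have hstep : Computable₂ fun (a : ℕ × ℕ) (p : ℕ × ℕ) =>
      p.2 + if h a.1 p.1 = h a.1 (p.1 + 1) then 0 else 1 := by
    have hcur : Computable fun q : (ℕ × ℕ) × ℕ × ℕ => h q.1.1 q.2.1 :=
      hh.comp (Computable.fst.comp Computable.fst) (Computable.fst.comp Computable.snd)
    have hnext : Computable fun q : (ℕ × ℕ) × ℕ × ℕ => h q.1.1 (q.2.1 + 1) :=
      hh.comp (Computable.fst.comp Computable.fst)
        (Computable.succ.comp (Computable.fst.comp Computable.snd))
    refine (Primrec.nat_add.to_comp.comp (Computable.snd.comp Computable.snd)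
      (Computable.cond (Primrec.beq.to_comp.comp hcur hnext)
        (Computable.const 0) (Computable.const 1))).to₂.of_eq fun ⟨a, p⟩ => ?_
    by_cases hp : h a.1 p.1 = h a.1 (p.1 + 1) <;> simp [hp, Bool.cond_eq_ite]
  refine (Computable.nat_rec Computable.snd (Computable.const 0) hstep).to₂.of_eq
    fun ⟨x, s⟩ => ?_
  induction s with
  | zero => rfl
  | succ s ih => simp only [changesBelow, ← ih]

theorem changesBelow_le_ncard {u : ℕ → ℕ} (hu : (mindChanges u).Finite) (s : ℕ) :
    changesBelow u s ≤ (mindChanges u).ncard := by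
  rw [changesBelow_eq_ncard]
  exact ncard_le_ncard inter_subset_left hu

theorem exists_changesBelow_eq_ncard {u : ℕ → ℕ} (hu : (mindChanges u).Finite) :
    ∃ s, changesBelow u s = (mindChanges u).ncard := by
  obtain ⟨s, hs⟩ := hu.bddAbove
  have hsub : mindChanges u ⊆ Iio (s + 1) := fun t ht => Nat.lt_succ_of_le (hs ht)
  exact ⟨s + 1, by rw [changesBelow_eq_ncard, inter_eq_left.2 hsub]⟩

theorem eq_of_ncard_le_changesBelow {u : ℕ → ℕ} {a s : ℕ} (hu : (mindChanges u).Finite)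
    (hlim : ∀ᶠ t in atTop, u t = a) (hs : (mindChanges u).ncard ≤ changesBelow u s) :
    u s = a := by
  rw [changesBelow_eq_ncard] at hs
  have hdone : mindChanges u ⊆ Iio s := by
    rw [← eq_of_subset_of_ncard_le inter_subset_left hs hu]
    exact inter_subset_right
  have hconst : ∀ t, s ≤ t → u t = u s := fun t hst => by
    induction t, hst using Nat.le_induction with
    | base => rfl
    | succ t hst ih =>
      rw [← ih]
      by_contra hne
      exact absurd (hdone (Ne.symm hne)) (not_lt.2 hst)
  obtain ⟨t, hta, hst⟩ := (hlim.and (eventually_ge_atTop s)).exists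
  rw [← hconst t hst, hta]

theorem exists_infinite_and_finite_succ {α : Type*} {T : ℕ → Set α} {n : ℕ}
    (h₀ : (T 0).Infinite) (hn : (T n).Finite) : ∃ j, (T j).Infinite ∧ (T (j + 1)).Finite := by
  induction n with
  | zero => exact absurd hn h₀
  | succ n ih => exact (T n).finite_or_infinite.elim ih fun h => ⟨n, h, hn⟩

theorem ceset_setOf_exists {p : ℕ → ℕ → Bool} (hp : Computable₂ p) :
    CEset {x | ∃ s, p x s = true} := by
  have hsearch : Partrec fun x => Nat.rfind fun s => Part.some (p x s) :=
    Partrec.rfind hp.partrec₂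
  obtain ⟨c, hc⟩ := Nat.Partrec.Code.exists_code.1 (Partrec.nat_iff.1 hsearch)
  refine ⟨c, ext fun x => ?_⟩
  rw [mem_ofPred_eq, mem_ofPred_eq, hc]
  refine Iff.trans ?_ Nat.rfind_dom.symm
  exact ⟨fun ⟨s, hs⟩ => ⟨s, hs ▸ Part.mem_some _, fun _ => trivial⟩,
    fun ⟨s, hs, _⟩ => ⟨s, (Part.mem_some_iff.1 hs).symm⟩⟩

theorem not_biImmune_of_ceset_inter {D S : Set ℕ} (hS : S.Infinite) (hD : CEset (S ∩ D))
    (hDc : CEset (S ∩ Dᶜ)) : ¬ BiImmune D := by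
  rintro ⟨⟨-, himm⟩, -, himmc⟩
  apply hS
  rw [← inter_union_compl S D]
  exact (himm _ hD inter_subset_right).union (himmc _ hDc inter_subset_right)

theorem ceset_setOf_exists_changesBelow {h : ℕ → ℕ → ℕ} (hh : Computable₂ h)
    (N j v : ℕ) :
    CEset {x | ∃ s, N < x ∧ j ≤ changesBelow (h x) s ∧ h x s = v} := by
  have hp : Computable₂ fun x s =>
      decide (N < x) && (decide (j ≤ changesBelow (h x) s) && decide (h x s = v)) :=
    (Primrec.and.to_comp.comp (Primrec.nat_lt.decide.to_comp.comp (Computable.const N)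
      Computable.fst) (Primrec.and.to_comp.comp (Primrec.nat_le.decide.to_comp.comp
        (Computable.const j) (computable₂_changesBelow hh))
          (Primrec.eq.decide.to_comp.comp hh (Computable.const v)))).to₂
  simpa only [Bool.and_eq_true, decide_eq_true_eq] using ceset_setOf_exists hp

theorem exists_infinite_settled {h : ℕ → ℕ → ℕ} {a : ℕ → ℕ} {n : ℕ}
    (hlim : ∀ x, ∀ᶠ t in atTop, h x t = a x) (hfin : ∀ x, (mindChanges (h x)).Finite)
    (hcard : ∀ x, (mindChanges (h x)).ncard ≤ n) :
    ∃ j N, {x | N < x ∧ ∃ s, j ≤ changesBelow (h x) s}.Infinite ∧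
      ∀ x s, N < x → j ≤ changesBelow (h x) s → h x s = a x := by
  let T : ℕ → Set ℕ := fun j => {x | ∃ s, j ≤ changesBelow (h x) s}
  have hT₀ : (T 0).Infinite := by
    have : T 0 = univ := eq_univ_of_forall fun x => ⟨0, Nat.zero_le _⟩
    exact this ▸ infinite_univ
  have hTn : (T (n + 1)).Finite := by
    convert finite_empty
    refine eq_empty_of_forall_notMem ?_
    rintro x ⟨s, hs⟩
    have := (changesBelow_le_ncard (hfin x) s).trans (hcard x)
    omega
  obtain ⟨j, hj, hj₁⟩ := exists_infinite_and_finite_succ hT₀ hTn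
  obtain ⟨N, hN⟩ := hj₁.bddAbove
  refine ⟨j, N, (hj.sdiff (finite_Iic N)).mono fun x hx => ⟨not_le.1 hx.2, hx.1⟩, ?_⟩
  intro x s hx hs
  obtain ⟨t, ht⟩ := exists_changesBelow_eq_ncard (hfin x)
  refine eq_of_ncard_le_changesBelow (hfin x) (hlim x) (le_trans ?_ hs)
  rw [← ht]
  -- `x > N` lies outside `T (j + 1)`, so the approximation at `x` changes at most `j` times
  by_contra hlt
  exact absurd (hN ⟨t, not_le.1 hlt⟩) (not_le.2 hx)

theorem setOf_chi_eq_one (D : Set ℕ) : {x | chi D x = 1} = D := by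
  ext x
  by_cases hx : x ∈ D <;> simp [chi, hx]

theorem setOf_chi_eq_zero (D : Set ℕ) : {x | chi D x = 0} = Dᶜ := by
  ext x
  by_cases hx : x ∈ D <;> simp [chi, hx]

theorem WeaklyNCE.not_biImmune {n : ℕ} {D : Set ℕ} (hD : WeaklyNCE n D) : ¬ BiImmune D := by
  obtain ⟨h, hh, hconv⟩ := hD
  choose hlim hfin hcard using hconv
  obtain ⟨j, N, hS, hsettled⟩ := exists_infinite_settled hlim hfin hcard
  have hW : ∀ v,
      CEset ({x | N < x ∧ ∃ s, j ≤ changesBelow (h x) s} ∩ {x | chi D x = v}) := by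
    intro v
    convert ceset_setOf_exists_changesBelow hh N j v using 1
    ext x
    constructor
    · rintro ⟨⟨hx, s, hs⟩, rfl⟩
      exact ⟨s, hx, hs, hsettled x s hx hs⟩
    · rintro ⟨s, hx, hs, rfl⟩
      exact ⟨⟨hx, s, hs⟩, (hsettled x s hx hs).symm⟩
  exact not_biImmune_of_ceset_inter hS (setOf_chi_eq_one D ▸ hW 1) (setOf_chi_eq_zero D ▸ hW 0)

namespace Nat.Partrec.Code

def haltsWithin (c : Code) (s q : ℕ) : Bool := (c.evaln s q).isSome

theorem primrec₂_haltsWithin (c : Code) : Primrec₂ c.haltsWithin :=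
  _root_.Primrec.option_isSome.comp (primrec_evaln.comp
    ((_root_.Primrec.fst.pair (_root_.Primrec.const c)).pair _root_.Primrec.snd))

theorem monotone_haltsWithin (c : Code) (q : ℕ) : Monotone fun s => c.haltsWithin s q :=
  fun _ _ hst => by
    simp only [haltsWithin, Bool.le_iff_imp, Option.isSome_iff_exists]
    exact fun ⟨a, ha⟩ => ⟨a, evaln_mono hst ha⟩

theorem haltsWithin_iff {c : Code} {q : ℕ} :
    (∃ s, c.haltsWithin s q = true) ↔ (c.eval q).Dom := by
  simp only [haltsWithin, Option.isSome_iff_exists, Part.dom_iff_mem, evaln_complete]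
  exact ⟨fun ⟨s, a, ha⟩ => ⟨a, s, ha⟩, fun ⟨a, s, ha⟩ => ⟨s, a, ha⟩⟩

theorem eventually_map_haltsWithin_eq_answers (c : Code) (l : List ℕ) :
    ∀ᶠ s in atTop, l.map (c.haltsWithin s) = answers {x | (c.eval x).Dom} l := by
  have hq : ∀ q, ∀ᶠ s in atTop, c.haltsWithin s q = true ↔ (c.eval q).Dom := by
    intro q
    by_cases hq : (c.eval q).Dom
    · obtain ⟨s, hs⟩ := haltsWithin_iff.2 hq
      filter_upwards [eventually_ge_atTop s] with t ht
      simpa [hq] using monotone_haltsWithin c q ht hs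
    · exact Eventually.of_forall fun s =>
        iff_of_false (fun h => hq (haltsWithin_iff.1 ⟨s, h⟩)) hq
  filter_upwards [(eventually_all_finite l.finite_toSet).2 fun q _ => hq q] with s hs
  exact List.map_congr_left fun q hmem => Bool.eq_iff_iff.2 (by simpa using hs q hmem)

end Nat.Partrec.Code

theorem ceset_Kset : CEset Kset := by
  obtain ⟨c, hc⟩ := Nat.Partrec.Code.exists_code.1 (Partrec.nat_iff.1
    (Nat.Partrec.Code.eval_part.comp (Computable.ofNat Nat.Partrec.Code) Computable.id))
  exact ⟨c, by rw [hc]; rfl⟩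

theorem BTTRed.exists_weaklyNCE {A B : Set ℕ} (hAB : BTTRed A B) (hB : CEset B) :
    ∃ n, WeaklyNCE n A := by
  obtain ⟨c, rfl⟩ := hB
  obtain ⟨f, g, k, hf, hg, hk, hred⟩ := hAB
  refine ⟨k, fun x s => cond (g x ((f x).map (c.haltsWithin s))) 1 0, ?_, fun x => ?_⟩
  · have hmap : Primrec fun p : ℕ × List ℕ => p.2.map (c.haltsWithin p.1) :=
      Primrec.list_map Primrec.snd
        (c.primrec₂_haltsWithin.comp (Primrec.fst.comp Primrec.fst) Primrec.snd)
    have hanswers : Computable fun p : ℕ × ℕ => (f p.1).map (c.haltsWithin p.2) :=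
      hmap.to_comp.comp (Computable.snd.pair (hf.comp Computable.fst))
    exact (Computable.cond (hg.comp Computable.fst hanswers)
      (Computable.const 1) (Computable.const 0)).to₂
  have hchanges :
      (mindChanges fun s => cond (g x ((f x).map (c.haltsWithin s))) 1 0).encard ≤ k :=
    calc _ ≤ _ := encard_le_encard (mindChanges_comp_subset (fun l => cond (g x l) 1 0) _)
      _ ≤ (f x).length := encard_mindChanges_map_le c.monotone_haltsWithin (f x)
      _ ≤ k := by exact_mod_cast hk x
  refine ⟨?_, encard_le_coe_iff_finite_ncard_le.1 hchanges⟩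
  filter_upwards [c.eventually_map_haltsWithin_eq_answers (f x)] with s hs
  rw [hs]
  cases hgx : g x (answers _ (f x)) <;> simp [chi, hred, hgx]

/-- If `D ≤_btt K` then `D` is not bi-immune. -/
theorem not_biImmune_of_btt_K (D : Set ℕ) (hD : BTTRed D Kset) :
    ¬ BiImmune D := by
  obtain ⟨n, hn⟩ := hD.exists_weaklyNCE ceset_Kset
  exact hn.not_biImmune
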